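/- arXiv:2601.04338 — 2 statements merged into one kernel-verified Lean document; each statement's English description precedes it below -/
import Mathlib

section
/- In any AG-group G, a*b = c*d if and only if d⁻¹*b = c*a⁻¹. -/
class AGGroup (G : Type*) extends Mul G, Inv G where
  e : G
  left_id : ∀ a : G, e * a = a
  inv_mul : ∀ a : G, a⁻¹ * a = e
  mul_inv : ∀ a : G, a * a⁻¹ = e
  left_invertive : ∀ x y z : G, (x * y) * z = (z * y) * x

def AGPar {G : Type*} [AGGroup G] (a b c d : G) : Prop :=
  ∃ p q : G, p * a = q * b ∧ p * d = q * c

namespace AGGroup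
variable {G : Type*} [AGGroup G]

lemma medial (a b c d : G) : (a * b) * (c * d) = (a * c) * (b * d) := by
  rw [left_invertive a b (c*d), left_invertive c d b, left_invertive (b*d) c a]

lemma mul_mul_inv (a b : G) : (a * b) * b⁻¹ = a := by
  rw [left_invertive, inv_mul, left_id]

lemma inv_inv (a : G) : a⁻¹⁻¹ = a := by
  have : a⁻¹⁻¹ = (a * a⁻¹) * a⁻¹⁻¹ := by rw [mul_inv, left_id]
  rw [this, left_invertive, inv_mul, left_id]

lemma key (a b c d : G) (h : a * b = c * d) : d⁻¹ * b = c * a⁻¹ := by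
  have hc : c = (a * b) * d⁻¹ := by rw [h, mul_mul_inv]
  rw [hc, left_invertive, medial, inv_mul, left_id]

end AGGroup

theorem stmt5 {G : Type*} [AGGroup G] (a b c d : G) :
    a * b = c * d ↔ d⁻¹ * b = c * a⁻¹ := by
  constructor
  · exact AGGroup.key a b c d
  · intro h
    have := AGGroup.key d⁻¹ b c a⁻¹ h
    rwa [AGGroup.inv_inv, AGGroup.inv_inv] at this
end

section
/- In any AG-group G, a*((b*c)*d) = c*((b*a)*d) for all a,b,c,d in G. -/
lemma ag_medial {G : Type*} [AGGroup G] (a b c d : G) :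
    (a * b) * (c * d) = (a * c) * (b * d) := by
  rw [AGGroup.left_invertive a b (c*d), AGGroup.left_invertive c d b,
      AGGroup.left_invertive (b*d) c a]

lemma ag_swap {G : Type*} [AGGroup G] (a b c : G) :
    a * (b * c) = b * (a * c) := by
  have h := ag_medial (AGGroup.e : G) a b c
  rwa [AGGroup.left_id, AGGroup.left_id] at h

theorem stmt9 {G : Type*} [AGGroup G] (a b c d : G) :
    a * ((b * c) * d) = c * ((b * a) * d) := by
  rw [ag_swap a, ag_medial b c a d, ← ag_swap c]
end
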